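/- arXiv:2206.10982 — 2 statements merged into one kernel-verified Lean document; each statement's English description precedes it below -/
import Mathlib

section
/- Let (L^c_1, …, L^c_n, L_1) be an exchangeable family of n+1 real-valued random variables (ties allowed), where n ≥ 1, and let α satisfy 1/(n+1) ≤ α < 1. Set k* = ⌈(n+1)(1−α)⌉, so that 1 ≤ k* ≤ n, and let L^c_{(k*)} denote the k*-th order statistic of the first n variables. Then Pr[L_1 > L^c_{(k*)}] ≤ α. -/
open MeasureTheory

/-- The `i`-th order statistic (0-indexed) of the finite tuple `f : Fin N → ℝ`. -/
noncomputable def orderStat {N : ℕ} (f : Fin N → ℝ) (i : Fin N) : ℝ := f (Tuple.sort f i)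

open Finset ENNReal

namespace LalAux

/-- number of strictly smaller entries -/
noncomputable def rnk {N : ℕ} (v : Fin N → ℝ) (j : Fin N) : ℕ :=
  #(univ.filter fun i => v i < v j)

lemma card_filter_val_lt {N k : ℕ} (hk : k ≤ N) :
    #(univ.filter fun q : Fin N => (q : ℕ) < k) = k := by
  classical
  have h : (univ.filter fun q : Fin N => (q : ℕ) < k) =
      (univ : Finset (Fin k)).image (Fin.castLE hk) := by
    ext q
    simp only [mem_filter, mem_univ, true_and, mem_image]
    constructor
    · intro h; exact ⟨⟨q, h⟩, rfl⟩
    · rintro ⟨a, rfl⟩; exact a.isLt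
  rw [h, Finset.card_image_of_injective _ (Fin.castLE_injective hk), card_univ, Fintype.card_fin]

lemma card_filter_comp {ι : Type*} [Fintype ι] [DecidableEq ι] (σ : Equiv.Perm ι)
    (p : ι → Prop) [DecidablePred p] :
    #(univ.filter fun i => p (σ i)) = #(univ.filter p) := by
  rw [← Finset.card_image_of_injective (univ.filter fun i => p (σ i)) σ.injective]
  congr 1
  ext i
  simp only [Finset.mem_image, Finset.mem_filter, Finset.mem_univ, true_and]
  constructor
  · rintro ⟨a, ha, rfl⟩; exact ha
  · intro h; exact ⟨σ.symm i, by simpa using h, by simp⟩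

lemma orderStat_lt_iff {N : ℕ} (v : Fin N → ℝ) (j : Fin N) (x : ℝ) :
    v (Tuple.sort v j) < x ↔ (j : ℕ) + 1 ≤ #(univ.filter fun i => v i < x) := by
  classical
  set σ := Tuple.sort v with hσ
  have hm : Monotone (v ∘ σ) := Tuple.monotone_sort v
  have hcard : #(univ.filter fun q : Fin N => v (σ q) < x) = #(univ.filter fun i => v i < x) :=
    card_filter_comp σ (fun i => v i < x)
  constructor
  · intro h
    rw [← hcard]
    have hsub : (univ.filter fun q : Fin N => (q : ℕ) < (j : ℕ) + 1) ⊆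
        (univ.filter fun q : Fin N => v (σ q) < x) := by
      intro q hq
      simp only [mem_filter, mem_univ, true_and] at hq ⊢
      have : q ≤ j := by omega
      exact lt_of_le_of_lt (hm this) h
    calc (j : ℕ) + 1 = #(univ.filter fun q : Fin N => (q : ℕ) < (j : ℕ) + 1) :=
          (card_filter_val_lt j.isLt).symm
      _ ≤ _ := Finset.card_le_card hsub
  · intro h
    by_contra hc
    push_neg at hc
    have hsub : (univ.filter fun q : Fin N => v (σ q) < x) ⊆
        (univ.filter fun q : Fin N => (q : ℕ) < (j : ℕ)) := by
      intro q hq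
      simp only [mem_filter, mem_univ, true_and] at hq ⊢
      by_contra hqj
      push_neg at hqj
      have : j ≤ q := by omega
      exact absurd hq (not_lt.mpr (le_trans hc (hm this)))
    have := Finset.card_le_card hsub
    rw [hcard, card_filter_val_lt j.isLt.le] at this
    omega

/-- at most N - k indices have rank ≥ k -/
lemma card_rank_ge_le {N k : ℕ} (hk : k ≤ N) (v : Fin N → ℝ) :
    #(univ.filter fun j => k ≤ rnk v j) ≤ N - k := by
  classical
  set σ := Tuple.sort v with hσ
  have hm : Monotone (v ∘ σ) := Tuple.monotone_sort v
  have hlow : ∀ p : Fin N, (p : ℕ) < k → rnk v (σ p) < k := by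
    intro p hp
    have hsub : (univ.filter fun q : Fin N => v (σ q) < v (σ p)) ⊆
        (univ.filter fun q : Fin N => (q : ℕ) < (p : ℕ)) := by
      intro q hq
      simp only [mem_filter, mem_univ, true_and] at hq ⊢
      by_contra hqp
      push_neg at hqp
      have : p ≤ q := by omega
      exact absurd hq (not_lt.mpr (hm this))
    have h1 : rnk v (σ p) ≤ (p : ℕ) := by
      have := Finset.card_le_card hsub
      rwa [card_filter_comp σ (fun i => v i < v (σ p)), card_filter_val_lt p.isLt.le] at this
    omega
  have hbig : k ≤ #(univ.filter fun j => rnk v j < k) := by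
    have hsub : ((univ.filter fun p : Fin N => (p : ℕ) < k)).image σ ⊆
        univ.filter fun j => rnk v j < k := by
      intro j hj
      simp only [mem_image, mem_filter, mem_univ, true_and] at hj ⊢
      obtain ⟨p, hp, rfl⟩ := hj
      exact hlow p hp
    calc k = (((univ.filter fun p : Fin N => (p : ℕ) < k)).image σ).card := by
          rw [Finset.card_image_of_injective _ σ.injective, card_filter_val_lt hk]
      _ ≤ _ := Finset.card_le_card hsub
  have hsplit := Finset.card_filter_add_card_filter_not
    (s := (univ : Finset (Fin N))) (p := fun j => k ≤ rnk v j)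
  simp only [not_le, Finset.card_univ, Fintype.card_fin] at hsplit
  omega

lemma measurable_rnk {N : ℕ} (j : Fin N) : Measurable fun v : Fin N → ℝ => rnk v j := by
  classical
  have : (fun v : Fin N → ℝ => rnk v j) =
      fun v => ∑ i : Fin N, if v i < v j then 1 else 0 := by
    funext v
    simp only [rnk, Finset.card_filter]
  rw [this]
  exact Finset.measurable_sum _ fun i _ =>
    Measurable.ite (measurableSet_lt (measurable_pi_apply i) (measurable_pi_apply j))
      measurable_const measurable_const

end LalAux

namespace LalAux

lemma rnk_comp {N : ℕ} (v : Fin N → ℝ) (σ : Equiv.Perm (Fin N)) (j : Fin N) :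
    rnk (v ∘ σ) j = rnk v (σ j) := by
  classical
  unfold rnk
  simpa using card_filter_comp σ (fun i => v i < v (σ j))

lemma count_castSucc {n : ℕ} (w : Fin (n + 1) → ℝ) :
    #(univ.filter fun a : Fin n => w a.castSucc < w (Fin.last n)) = rnk w (Fin.last n) := by
  classical
  unfold rnk
  rw [← Finset.card_image_of_injective
    (univ.filter fun a : Fin n => w a.castSucc < w (Fin.last n)) (Fin.castSucc_injective n)]
  congr 1
  ext i
  simp only [mem_image, mem_filter, mem_univ, true_and]
  constructor
  · rintro ⟨a, ha, rfl⟩; exact ha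
  · intro h
    have hne : i ≠ Fin.last n := by rintro rfl; exact lt_irrefl _ h
    obtain ⟨a, rfl⟩ := Fin.exists_castSucc_eq.mpr hne
    exact ⟨a, h, rfl⟩

lemma main_bound {N : ℕ} {Ω : Type*} [MeasurableSpace Ω] (ℙ : MeasureTheory.Measure Ω)
    [IsProbabilityMeasure ℙ] (W : Ω → Fin N → ℝ) (hW : Measurable W)
    (hexch : ∀ σ : Equiv.Perm (Fin N),
      Measure.map (fun ω => W ω ∘ σ) ℙ = Measure.map W ℙ)
    (k : ℕ) (hk : k ≤ N) (j₀ : Fin N) :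
    (N : ℝ≥0∞) * ℙ {ω | k ≤ rnk (W ω) j₀} ≤ ((N - k : ℕ) : ℝ≥0∞) := by
  classical
  have hB : ∀ j : Fin N, MeasurableSet {v : Fin N → ℝ | k ≤ rnk v j} := fun j =>
    (measurable_rnk j) measurableSet_Ici
  have hA : ∀ j : Fin N, MeasurableSet {ω | k ≤ rnk (W ω) j} := fun j =>
    hW (hB j)
  have hPeq : ∀ j : Fin N, ℙ {ω | k ≤ rnk (W ω) j} = ℙ {ω | k ≤ rnk (W ω) j₀} := by
    intro j
    set σ := Equiv.swap j j₀ with hσdef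
    have hσm : Measurable fun ω => W ω ∘ σ :=
      measurable_pi_lambda _ fun i => (measurable_pi_apply (σ i)).comp hW
    have hpre : W ⁻¹' {v : Fin N → ℝ | k ≤ rnk v j} = {ω | k ≤ rnk (W ω) j} := rfl
    calc ℙ {ω | k ≤ rnk (W ω) j} = Measure.map W ℙ {v | k ≤ rnk v j} := by
          rw [Measure.map_apply hW (hB j)]; rfl
      _ = Measure.map (fun ω => W ω ∘ σ) ℙ {v | k ≤ rnk v j} := by rw [hexch σ]
      _ = ℙ ((fun ω => W ω ∘ σ) ⁻¹' {v | k ≤ rnk v j}) := Measure.map_apply hσm (hB j)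
      _ = ℙ {ω | k ≤ rnk (W ω) j₀} := by
          congr 1
          ext ω
          simp only [Set.mem_preimage, Set.mem_setOf_eq, rnk_comp]
          rw [hσdef, Equiv.swap_apply_left]
  have hsum : ∑ j : Fin N, ℙ {ω | k ≤ rnk (W ω) j} ≤ ((N - k : ℕ) : ℝ≥0∞) := by
    calc ∑ j : Fin N, ℙ {ω | k ≤ rnk (W ω) j}
        = ∫⁻ ω, ∑ j : Fin N, ({ω | k ≤ rnk (W ω) j}).indicator (fun _ => (1:ℝ≥0∞)) ω ∂ℙ := by
          rw [lintegral_finset_sum _ fun j _ => measurable_const.indicator (hA j)]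
          exact Finset.sum_congr rfl fun j _ => (lintegral_indicator_one (hA j)).symm
      _ ≤ ∫⁻ _, ((N - k : ℕ) : ℝ≥0∞) ∂ℙ := by
          apply lintegral_mono
          intro ω
          have h1 : ∑ j : Fin N, ({ω | k ≤ rnk (W ω) j}).indicator (fun _ => (1:ℝ≥0∞)) ω
              = (#(univ.filter fun j : Fin N => k ≤ rnk (W ω) j) : ℝ≥0∞) := by
            rw [Finset.card_filter]
            push_cast
            refine Finset.sum_congr rfl fun j _ => ?_
            simp [Set.indicator_apply]
          show ∑ j : Fin N, ({ω | k ≤ rnk (W ω) j}).indicator (fun _ => (1:ℝ≥0∞)) ω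
              ≤ ((N - k : ℕ) : ℝ≥0∞)
          rw [h1]
          exact_mod_cast card_rank_ge_le hk (W ω)
      _ = ((N - k : ℕ) : ℝ≥0∞) := by simp
  calc (N : ℝ≥0∞) * ℙ {ω | k ≤ rnk (W ω) j₀}
      = ∑ _j : Fin N, ℙ {ω | k ≤ rnk (W ω) j₀} := by
        rw [Finset.sum_const, card_univ, Fintype.card_fin, nsmul_eq_mul]
    _ = ∑ j : Fin N, ℙ {ω | k ≤ rnk (W ω) j} := Finset.sum_congr rfl fun j _ => (hPeq j).symm
    _ ≤ _ := hsum

end LalAux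


lemma orderStat_lt_iff' {N : ℕ} (v : Fin N → ℝ) (j : Fin N) (x : ℝ) :
    orderStat v j < x ↔ (j : ℕ) + 1 ≤ #(univ.filter fun i => v i < x) :=
  LalAux.orderStat_lt_iff v j x

/-- Let `(L^c_1, …, L^c_n, L_1)` be an exchangeable family of `n+1` real random variables
(ties allowed), `n ≥ 1`, and let `1/(n+1) ≤ α < 1`.  With `k* = ⌈(n+1)(1−α)⌉` (so that
`1 ≤ k* ≤ n`), we have `Pr[L_1 > L^c_(k*)] ≤ α`. -/
theorem lal_m_one_upper (n : ℕ) (hn : 1 ≤ n)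
    {Ω : Type*} [MeasurableSpace Ω] (ℙ : Measure Ω) [IsProbabilityMeasure ℙ]
    (W : Ω → Fin (n + 1) → ℝ) (hW : Measurable W)
    (hexch : ∀ σ : Equiv.Perm (Fin (n + 1)),
      Measure.map (fun ω => W ω ∘ σ) ℙ = Measure.map W ℙ)
    (α : ℝ) (hα1 : 1 / ((n : ℝ) + 1) ≤ α) (hα2 : α < 1) :
    ℙ {ω | orderStat (fun a : Fin n => W ω a.castSucc)
            ⟨⌈((n : ℝ) + 1) * (1 - α)⌉₊ - 1, by
              have hpos : (0 : ℝ) < (n : ℝ) + 1 := by positivity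
              have h1 : 1 ≤ α * ((n : ℝ) + 1) := (div_le_iff₀ hpos).mp hα1
              have h2 : ((n : ℝ) + 1) * (1 - α) ≤ (n : ℝ) := by nlinarith
              have h3 : ⌈((n : ℝ) + 1) * (1 - α)⌉₊ ≤ n := Nat.ceil_le.mpr h2
              omega⟩
          < W ω (Fin.last n)}
      ≤ ENNReal.ofReal α := by
  classical
  set k := ⌈((n : ℝ) + 1) * (1 - α)⌉₊ with hkdef
  have hpos : (0 : ℝ) < (n : ℝ) + 1 := by positivity
  have h1 : 1 ≤ α * ((n : ℝ) + 1) := (div_le_iff₀ hpos).mp hα1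
  have hα0 : 0 ≤ α := by nlinarith
  have hk1 : 1 ≤ k := Nat.ceil_pos.mpr (by nlinarith)
  have hkn : k ≤ n := Nat.ceil_le.mpr (by nlinarith)
  have hkN : k ≤ n + 1 := by omega
  have hmain := LalAux.main_bound ℙ W hW hexch k hkN (Fin.last n)
  have hceil : ((n : ℝ) + 1) * (1 - α) ≤ (k : ℝ) := Nat.le_ceil _
  have hfinal : ((n + 1 - k : ℕ) : ℝ≥0∞) ≤ ((n + 1 : ℕ) : ℝ≥0∞) * ENNReal.ofReal α := by
    have hr : ((n + 1 - k : ℕ) : ℝ) ≤ (((n + 1 : ℕ) : ℝ)) * α := by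
      rw [Nat.cast_sub hkN]
      push_cast
      nlinarith
    calc ((n + 1 - k : ℕ) : ℝ≥0∞) = ENNReal.ofReal ((n + 1 - k : ℕ) : ℝ) :=
          (ENNReal.ofReal_natCast _).symm
      _ ≤ ENNReal.ofReal (((n + 1 : ℕ) : ℝ) * α) := ENNReal.ofReal_le_ofReal hr
      _ = ((n + 1 : ℕ) : ℝ≥0∞) * ENNReal.ofReal α := by
          rw [ENNReal.ofReal_mul (by positivity), ENNReal.ofReal_natCast]
  have hgoal : ℙ {ω | k ≤ LalAux.rnk (W ω) (Fin.last n)} ≤ ENNReal.ofReal α :=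
    (ENNReal.mul_le_mul_iff_right (by simp) (ENNReal.natCast_ne_top _)).mp
      (le_trans hmain hfinal)
  refine le_trans (le_of_eq ?_) hgoal
  congr 1
  ext ω
  simp only [Set.mem_setOf_eq]
  rw [orderStat_lt_iff']
  rw [LalAux.count_castSucc]
  show k - 1 + 1 ≤ _ ↔ k ≤ _
  omega
end

section
/- Fix integers n ≥ 1 and 1 ≤ k ≤ n, and β ∈ (0,1). Then, as m → ∞ over positive integers, a(k) = Σ_{j=k}^{n+1} C(n−j+m−⌈mβ⌉, n−j)·C(j+⌈mβ⌉−1, j) / C(n+m, m) converges to Σ_{j=k}^{n} C(n, j) β^j (1−β)^{n−j}, i.e., to the upper tail 1 − BIN(k−1; n, β) of the binomial distribution with parameters n and β. -/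
open Filter

open Finset in
/-- Cast of `(a+t).choose t` as a product over `range t`, divided by `t!`. -/
lemma cast_choose_add_aux (a t : ℕ) :
    ((a + t).choose t : ℝ) = (∏ i ∈ range t, ((a : ℝ) + t - i)) / t.factorial := by
  rw [eq_div_iff (by positivity)]
  have h : ((a + t).descFactorial t : ℝ) = (a + t).choose t * t.factorial := by
    rw [Nat.descFactorial_eq_factorial_mul_choose]; push_cast; ring
  rw [← h, Nat.descFactorial_eq_prod_range]
  push_cast [Nat.cast_prod]
  refine Finset.prod_congr rfl fun i hi => ?_
  have : i ≤ a + t := by have := Finset.mem_range.mp hi; omega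
  push_cast [Nat.cast_sub this]
  ring

open Finset in
lemma choose_div_pow_tendsto (t : ℕ) (a : ℕ → ℕ) (x : ℝ)
    (h : Tendsto (fun m => (a m : ℝ) / m) atTop (nhds x)) :
    Tendsto (fun m => ((a m + t).choose t : ℝ) / (m : ℝ) ^ t) atTop
      (nhds (x ^ t / t.factorial)) := by
  have key : ∀ᶠ m : ℕ in atTop,
      (∏ i ∈ range t, ((a m : ℝ) / m + ((t : ℝ) - i) / m)) / t.factorial
        = ((a m + t).choose t : ℝ) / (m : ℝ) ^ t := by
    filter_upwards [eventually_ge_atTop 1] with m hm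
    have hm0 : (m : ℝ) ≠ 0 := by positivity
    rw [cast_choose_add_aux]
    have e : ∀ i ∈ range t, (a m : ℝ) / m + ((t : ℝ) - i) / m = ((a m : ℝ) + t - i) / m :=
      fun i _ => by ring
    rw [Finset.prod_congr rfl e, Finset.prod_div_distrib, Finset.prod_const, Finset.card_range,
      div_div, div_div, mul_comm]
  refine Tendsto.congr' key ?_
  have hprod : Tendsto (fun m => ∏ i ∈ range t, ((a m : ℝ) / m + ((t : ℝ) - i) / m)) atTop
      (nhds (x ^ t)) := by
    have hx : (x : ℝ) ^ t = ∏ _i ∈ range t, x := by simp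
    rw [hx]
    refine tendsto_finset_prod _ fun i _ => ?_
    have h2 : Tendsto (fun m : ℕ => ((t : ℝ) - i) / m) atTop (nhds 0) :=
      tendsto_const_nhds.div_atTop tendsto_natCast_atTop_atTop
    simpa using h.add h2
  simpa using hprod.div_const _

theorem ceil_div_tendsto (β : ℝ) (hβ0 : 0 < β) :
    Tendsto (fun m : ℕ => (⌈(m : ℝ) * β⌉₊ : ℝ) / m) atTop (nhds β) := by
  have hlow : ∀ᶠ m : ℕ in atTop, β ≤ (⌈(m : ℝ) * β⌉₊ : ℝ) / m := by
    filter_upwards [eventually_ge_atTop 1] with m hm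
    have hm0 : (0 : ℝ) < m := by exact_mod_cast hm
    rw [le_div_iff₀ hm0, mul_comm]
    exact Nat.le_ceil _
  have hhigh : ∀ᶠ m : ℕ in atTop, (⌈(m : ℝ) * β⌉₊ : ℝ) / m ≤ β + 1 / m := by
    filter_upwards [eventually_ge_atTop 1] with m hm
    have hm0 : (0 : ℝ) < m := by exact_mod_cast hm
    rw [div_le_iff₀ hm0]
    have h1 := (Nat.ceil_lt_add_one (by positivity : (0:ℝ) ≤ (m : ℝ) * β)).le
    calc (⌈(m : ℝ) * β⌉₊ : ℝ) ≤ (m : ℝ) * β + 1 := h1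
      _ = (β + 1 / m) * m := by field_simp
  have h1 : Tendsto (fun m : ℕ => β + 1 / (m : ℝ)) atTop (nhds β) := by
    simpa using (tendsto_const_nhds (x := β)).add (tendsto_one_div_atTop_nhds_zero_nat)
  exact tendsto_of_tendsto_of_tendsto_of_le_of_le' tendsto_const_nhds h1 hlow hhigh

/-- For `k ∈ {1,…,n+1}`, `a(k) = Σ_{j=k}^{n+1} C(n−j+m−⌈mβ⌉, n−j)·C(j+⌈mβ⌉−1, j) / C(n+m, m)`,
with the convention `C(b, r) = 0` for `r < 0`: the `j = n+1` term vanishes, so the sum is taken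
over `k ≤ j ≤ n`. -/
noncomputable def aFun (n m : ℕ) (β : ℝ) (k : ℕ) : ℝ :=
  ∑ j ∈ Finset.Icc k n,
    (Nat.choose (n - j + m - ⌈(m : ℝ) * β⌉₊) (n - j)
        * Nat.choose (j + ⌈(m : ℝ) * β⌉₊ - 1) j : ℝ)
      / Nat.choose (n + m) m

/-- Fix `n ≥ 1`, `1 ≤ k ≤ n` and `β ∈ (0,1)`.  As `m → ∞` over positive integers, `a(k)`
converges to `Σ_{j=k}^{n} C(n, j) β^j (1−β)^{n−j}`, i.e. to the upper tail
`1 − BIN(k−1; n, β)` of the binomial distribution with parameters `n` and `β`. -/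
theorem aFun_tendsto_binomial_tail (n k : ℕ) (hn : 1 ≤ n) (hk1 : 1 ≤ k) (hkn : k ≤ n)
    (β : ℝ) (hβ0 : 0 < β) (hβ1 : β < 1) :
    Tendsto (fun m : ℕ => aFun n m β k) atTop
      (nhds (∑ j ∈ Finset.Icc k n, (Nat.choose n j : ℝ) * β ^ j * (1 - β) ^ (n - j))) := by
  unfold aFun
  refine tendsto_finset_sum _ fun j hj => ?_
  obtain ⟨hkj, hjn⟩ := Finset.mem_Icc.mp hj
  set c : ℕ → ℕ := fun m => ⌈(m : ℝ) * β⌉₊ with hc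
  have hcm : ∀ m : ℕ, c m ≤ m := fun m => by
    rw [hc]; exact Nat.ceil_le.mpr (by nlinarith [Nat.cast_nonneg (α := ℝ) m])
  have hc1 : ∀ m : ℕ, 1 ≤ m → 1 ≤ c m := fun m hm => by
    rw [hc]
    have : (0:ℝ) < (m:ℝ) * β := by
      have : (0:ℝ) < (m:ℝ) := by exact_mod_cast hm
      positivity
    exact Nat.ceil_pos.mpr this
  have hcdiv : Tendsto (fun m : ℕ => (c m : ℝ) / m) atTop (nhds β) := ceil_div_tendsto β hβ0
  -- A
  have hA0 : Tendsto (fun m : ℕ => ((m - c m : ℕ) : ℝ) / m) atTop (nhds (1 - β)) := by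
    refine Tendsto.congr' ?_ (((tendsto_const_nhds (x := (1:ℝ)))).sub hcdiv)
    filter_upwards [eventually_ge_atTop 1] with m hm
    have hm0 : (m : ℝ) ≠ 0 := by positivity
    rw [Nat.cast_sub (hcm m)]
    field_simp
  have hA : Tendsto (fun m : ℕ => (((m - c m) + (n - j)).choose (n - j) : ℝ) / (m : ℝ) ^ (n - j))
      atTop (nhds ((1 - β) ^ (n - j) / (n - j).factorial)) :=
    choose_div_pow_tendsto (n - j) _ _ hA0
  -- B
  have hB0 : Tendsto (fun m : ℕ => ((c m - 1 : ℕ) : ℝ) / m) atTop (nhds β) := by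
    have h1 : Tendsto (fun m : ℕ => (c m : ℝ) / m - 1 / m) atTop (nhds β) := by
      simpa using hcdiv.sub tendsto_one_div_atTop_nhds_zero_nat
    refine Tendsto.congr' ?_ h1
    filter_upwards [eventually_ge_atTop 1] with m hm
    have hm0 : (m : ℝ) ≠ 0 := by positivity
    rw [Nat.cast_sub (hc1 m hm)]
    push_cast
    ring
  have hB : Tendsto (fun m : ℕ => (((c m - 1) + j).choose j : ℝ) / (m : ℝ) ^ j)
      atTop (nhds (β ^ j / j.factorial)) :=
    choose_div_pow_tendsto j _ _ hB0
  -- C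
  have hC0 : Tendsto (fun m : ℕ => ((m : ℕ) : ℝ) / m) atTop (nhds 1) := by
    refine Tendsto.congr' ?_ (tendsto_const_nhds (x := (1:ℝ)))
    filter_upwards [eventually_ge_atTop 1] with m hm
    have hm0 : (m : ℝ) ≠ 0 := by positivity
    rw [div_self hm0]
  have hC : Tendsto (fun m : ℕ => ((m + n).choose n : ℝ) / (m : ℝ) ^ n)
      atTop (nhds (1 ^ n / n.factorial)) :=
    choose_div_pow_tendsto n _ _ hC0
  have hCne : (1 : ℝ) ^ n / n.factorial ≠ 0 := by positivity
  have hcomb := (hA.mul hB).div hC hCne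
  have hlim : ((1 - β) ^ (n - j) / (n - j).factorial * (β ^ j / j.factorial))
      / ((1:ℝ) ^ n / n.factorial) = (Nat.choose n j : ℝ) * β ^ j * (1 - β) ^ (n - j) := by
    rw [Nat.cast_choose ℝ hjn]
    have h1 : ((n - j).factorial : ℝ) ≠ 0 := by positivity
    have h2 : ((j).factorial : ℝ) ≠ 0 := by positivity
    have h3 : ((n).factorial : ℝ) ≠ 0 := by positivity
    field_simp
    ring
  rw [← hlim]
  refine Tendsto.congr' ?_ hcomb
  filter_upwards [eventually_ge_atTop 1] with m hm
  have hm0 : (m : ℝ) ≠ 0 := by positivity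
  have hCpos : (0 : ℝ) < ((m + n).choose n : ℝ) := by
    exact_mod_cast Nat.choose_pos (Nat.le_add_left n m)
  have e1 : n - j + m - c m = (m - c m) + (n - j) := by
    have := hcm m; omega
  have e2 : j + c m - 1 = (c m - 1) + j := by
    have := hc1 m hm; omega
  have e3 : (n + m).choose m = (m + n).choose n := by
    rw [Nat.add_comm n m, Nat.choose_symm_add]
  rw [e1, e2, e3]
  have hpow : (m : ℝ) ^ (n - j) * (m : ℝ) ^ j = (m : ℝ) ^ n := by
    rw [← pow_add]; congr 1; omega
  have hCne' : ((m + n).choose n : ℝ) ≠ 0 := ne_of_gt hCpos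
  rw [Pi.div_apply]
  field_simp
  rw [← hpow]
  ring
end
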